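/- Let κ be an uncountable cardinal with κ^{<κ} = κ. Suppose T is a closed κ⁺,κ-tree and h is a function on T such that h assigns a κ-Borel subset of 2^κ to each leaf of T and the symbol ∪ or ∩ to every other node. Then the set {η ∈ 2^κ : player II has a winning strategy in the game B*(T,h,η)} is a Borel* set. -/

import Mathlib

/-!
Graft onto each leaf `ℓ` of a code a code `C ℓ` of the label of `ℓ`. Player II wins the grafted
game at `x` iff she wins the original one: she plays the original game until a leaf `ℓ` is
reached, and from there a winning strategy in the game of `C ℓ`, which exists exactly when `x`
lies in the label of `ℓ`. So codes with `Borel*` leaf labels define `Borel*` sets, and it remains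
to see that every `κ`-Borel set is `Borel*`: a basic open set `s` is coded by the tree of height
one with root `∪` and every leaf labelled `s`, and a union or intersection of `κ` many `Borel*`
sets by grafting their codes onto a tree of height one with root `∪` or `∩`.
-/

noncomputable section

open Cardinal Set

namespace GenCantor

/-- The set of ordinals below `κ`, used as the domain `κ` of coded structures. -/
abbrev O (κ : Cardinal.{0}) : Type 1 := ↥(Set.Iio κ.ord)

/-- The generalized Cantor space `2^κ`. -/
abbrev Point (κ : Cardinal.{0}) : Type 1 := O κ → Bool

/-- The basic open set `[ζ]` determined by the restriction of `ζ` to the ordinals below `β`. -/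
def basicOpen (κ : Cardinal.{0}) (β : Ordinal) (ζ : O κ → Bool) : Set (Point κ) :=
  {η | ∀ γ : O κ, (γ : Ordinal) < β → η γ = ζ γ}

/-- The collection of basic open subsets of `2^κ`. -/
def basicOpens (κ : Cardinal.{0}) : Set (Set (Point κ)) :=
  {s | ∃ β < κ.ord, ∃ ζ, s = basicOpen κ β ζ}

/-- The bounded topology on `2^κ`, generated by the basic open sets. -/
def boundedTopology (κ : Cardinal.{0}) : TopologicalSpace (Point κ) :=
  TopologicalSpace.generateFrom (basicOpens κ)

/-- Partial sequences of elements of `κ`: a node of the tree `κ^{<κ}` is represented by a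
function `Ordinal → Option (O κ)` whose support is an initial segment `Iio β`, `β < κ`. -/
abbrev PreSeq (κ : Cardinal.{0}) : Type 1 := Ordinal → Option (O κ)

/-- `f` represents a sequence of ordinals `< κ` of length `< κ`. -/
def IsSeq (κ : Cardinal.{0}) (f : PreSeq κ) : Prop :=
  ∃ β < κ.ord, ∀ γ, (f γ).isSome ↔ γ < β

/-- The (initial segment) tree order on sequences. -/
def seqLE {κ : Cardinal.{0}} (f g : PreSeq κ) : Prop :=
  ∀ γ x, f γ = some x → g γ = some x

/-- The empty sequence, the root of a tree of sequences. -/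
def seqRoot (κ : Cardinal.{0}) : PreSeq κ := fun _ => none

/-- The supremum (union) of a chain of sequences. -/
def seqSup {κ : Cardinal.{0}} (c : Set (PreSeq κ)) : PreSeq κ :=
  fun γ => open scoped Classical in
    if h : ∃ x, ∃ f ∈ c, f γ = some x then some h.choose else none


/-- `g` is an immediate successor of `f` in the tree `T`. -/
def ImmSucc {κ : Cardinal.{0}} (T : Set (PreSeq κ)) (f g : PreSeq κ) : Prop :=
  g ∈ T ∧ seqLE f g ∧ f ≠ g ∧ ∀ h ∈ T, seqLE f h → seqLE h g → h = f ∨ h = g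

/-- `f` is a leaf of the tree `T`. -/
def IsLeaf {κ : Cardinal.{0}} (T : Set (PreSeq κ)) (f : PreSeq κ) : Prop :=
  f ∈ T ∧ ∀ g ∈ T, seqLE f g → g = f

/-- Labels for the nodes of a `Borel*`-code over the space `Z`: every non-leaf node is
labelled `∩` or `∪`, and every leaf is labelled by a subset of `Z`. -/
inductive BLabel (Z : Type*) : Type _ where
  | inter : BLabel Z
  | union : BLabel Z
  | leaf : Set Z → BLabel Z

/-- A `Borel*`-code over the space `Z` whose leaf labels are members of the family
`Basic` of subsets of `Z` (for genuine `Borel*`-codes, `Basic` is the family of basic open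
sets): a closed `κ⁺,κ`-tree, presented as a downward closed subtree of `κ^{<κ}` of
cardinality `≤ κ` with no chains of length `κ` in which every chain has a (unique)
supremum, together with a labelling `h` of its nodes. -/
structure BorelStarCode (κ : Cardinal.{0}) (Z : Type*) (Basic : Set (Set Z)) where
  T : Set (PreSeq κ)
  h : PreSeq κ → BLabel Z
  mem_isSeq : ∀ f ∈ T, IsSeq κ f
  root_mem : seqRoot κ ∈ T
  downward : ∀ f ∈ T, ∀ g, IsSeq κ g → seqLE g f → g ∈ T
  card_le : Cardinal.mk ↥T ≤ Cardinal.lift.{1} κ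
  no_long_chain : ∀ c ⊆ T, IsChain seqLE c → Cardinal.mk ↥c < Cardinal.lift.{1} κ
  chain_sup : ∀ c ⊆ T, c.Nonempty → IsChain seqLE c → seqSup c ∈ T
  label_leaf : ∀ f ∈ T, IsLeaf T f → ∃ s ∈ Basic, h f = BLabel.leaf s
  label_node : ∀ f ∈ T, ¬ IsLeaf T f → h f = BLabel.inter ∨ h f = BLabel.union

/-- The positions of the game `B*(T, h, x)` that can be reached when player II plays
according to the strategy `σ`: the game starts at the root; at a node labelled `∩`
player I chooses an immediate successor, at a node labelled `∪` player II moves according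
to `σ`, and at a limit the game continues from the supremum of the previous moves. -/
inductive Reach {κ : Cardinal.{0}} {Z : Type*} {Basic : Set (Set Z)}
    (code : BorelStarCode κ Z Basic) (σ : PreSeq κ → PreSeq κ) : PreSeq κ → Prop where
  | root : Reach code σ (seqRoot κ)
  | inter (f g : PreSeq κ) : Reach code σ f → code.h f = BLabel.inter →
      ImmSucc code.T f g → Reach code σ g
  | union (f : PreSeq κ) : Reach code σ f → code.h f = BLabel.union →
      Reach code σ (σ f)
  | lim (c : Set (PreSeq κ)) : c.Nonempty → IsChain seqLE c →
      (∀ f ∈ c, Reach code σ f) → Reach code σ (seqSup c)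

/-- Player II has a winning strategy in the game `B*(T, h, x)`: a strategy `σ` which
always chooses an immediate successor at reachable `∪`-nodes, and such that `x` belongs to
the label of every reachable leaf. -/
def IIWinsBStar {κ : Cardinal.{0}} {Z : Type*} {Basic : Set (Set Z)}
    (code : BorelStarCode κ Z Basic) (x : Z) : Prop :=
  ∃ σ : PreSeq κ → PreSeq κ,
    (∀ f, Reach code σ f → code.h f = BLabel.union → ImmSucc code.T f (σ f)) ∧
    (∀ f s, Reach code σ f → code.h f = BLabel.leaf s → x ∈ s)

/-- `B` is a `Borel*` subset of `Z` (with respect to the family `Basic` of basic open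
subsets of `Z`): there is a `Borel*`-code such that `B` is the set of points for which
player II has a winning strategy in the associated game. -/
def IsBorelStar (κ : Cardinal.{0}) {Z : Type*} (Basic : Set (Set Z)) (B : Set Z) : Prop :=
  ∃ code : BorelStarCode κ Z Basic, B = {x | IIWinsBStar code x}


/-- The `κ`-Borel subsets of `2^κ`: the smallest collection of sets containing the basic
open sets and closed under unions and intersections of length (at most) `κ`. -/
inductive IsKBorel (κ : Cardinal.{0}) : Set (Point κ) → Prop where
  | basic : ∀ s ∈ basicOpens κ, IsKBorel κ s
  | iUnion (ι : Type) (hι : Cardinal.mk ι ≤ κ) (f : ι → Set (Point κ)) :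
      (∀ i, IsKBorel κ (f i)) → IsKBorel κ (⋃ i, f i)
  | iInter (ι : Type) (hι : Cardinal.mk ι ≤ κ) (f : ι → Set (Point κ)) :
      (∀ i, IsKBorel κ (f i)) → IsKBorel κ (⋂ i, f i)

section Sequences

variable {κ : Cardinal.{0}}

lemma one_lt_ord (hκ : ℵ₀ ≤ κ) : (1 : Ordinal) < κ.ord :=
  Ordinal.one_lt_omega0.trans_le (Cardinal.omega0_le_ord.2 hκ)

lemma mk_O (κ : Cardinal.{0}) : #(O κ) = Cardinal.lift.{1} κ := by
  rw [Cardinal.mk_Iio_ordinal, Cardinal.card_ord]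

lemma seqLE_refl (f : PreSeq κ) : seqLE f f := fun _ _ h => h

instance : Std.Refl (seqLE (κ := κ)) := ⟨seqLE_refl⟩

lemma seqLE.trans {f g p : PreSeq κ} (h₁ : seqLE f g) (h₂ : seqLE g p) : seqLE f p :=
  fun γ x hx => h₂ γ x (h₁ γ x hx)

lemma seqLE.antisymm {f g : PreSeq κ} (h₁ : seqLE f g) (h₂ : seqLE g f) : f = g :=
  funext fun γ => Option.ext fun x => ⟨h₁ γ x, h₂ γ x⟩

lemma seqRoot_seqLE (f : PreSeq κ) : seqLE (seqRoot κ) f := fun _ _ h => nomatch h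

lemma eq_seqRoot_of_seqLE {f : PreSeq κ} (h : seqLE f (seqRoot κ)) : f = seqRoot κ :=
  h.antisymm (seqRoot_seqLE f)

lemma isSeq_seqRoot (hκ : ℵ₀ ≤ κ) : IsSeq κ (seqRoot κ) :=
  ⟨0, zero_lt_one.trans (one_lt_ord hκ), fun γ => by simp [seqRoot]⟩

lemma eq_of_isChain {c : Set (PreSeq κ)} (hc : IsChain seqLE c) {f g : PreSeq κ}
    (hf : f ∈ c) (hg : g ∈ c) {γ : Ordinal} {x y : O κ} (hx : f γ = some x)
    (hy : g γ = some y) : x = y := by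
  rcases hc.total hf hg with h | h
  · exact Option.some_inj.1 ((h γ x hx).symm.trans hy)
  · exact Option.some_inj.1 (hx.symm.trans (h γ y hy))

def len (f : PreSeq κ) : Ordinal := sInf {γ | f γ = none}

lemma len_eq {f : PreSeq κ} {β : Ordinal} (hβ : ∀ γ, (f γ).isSome ↔ γ < β) : len f = β := by
  have : {γ | f γ = none} = Ici β :=
    Set.ext fun γ => (Option.not_isSome_iff_eq_none.symm.trans (not_congr (hβ γ))).trans not_lt
  rw [len, this, csInf_Ici]

lemma isSome_iff_lt_len {f : PreSeq κ} (hf : IsSeq κ f) (γ : Ordinal) :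
    (f γ).isSome ↔ γ < len f := by
  obtain ⟨β, -, hβ⟩ := hf
  rw [len_eq hβ, hβ]

lemma len_lt {f : PreSeq κ} (hf : IsSeq κ f) : len f < κ.ord := by
  obtain ⟨β, hβκ, hβ⟩ := hf
  rwa [len_eq hβ]

lemma seqLE_of_len_le {f g p : PreSeq κ} (hf : IsSeq κ f) (hg : IsSeq κ g)
    (hfp : seqLE f p) (hgp : seqLE g p) (hlen : len f ≤ len g) : seqLE f g := by
  intro γ x hx
  have hγ : γ < len g := ((isSome_iff_lt_len hf γ).1 (Option.isSome_of_eq_some hx)).trans_le hlen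
  obtain ⟨y, hy⟩ := Option.isSome_iff_exists.1 ((isSome_iff_lt_len hg γ).2 hγ)
  rwa [Option.some_inj.1 ((hfp γ x hx).symm.trans (hgp γ y hy))]

lemma seqLE_total_of_seqLE {f g p : PreSeq κ} (hf : IsSeq κ f) (hg : IsSeq κ g)
    (hfp : seqLE f p) (hgp : seqLE g p) : seqLE f g ∨ seqLE g f :=
  (le_total (len f) (len g)).imp (seqLE_of_len_le hf hg hfp hgp) (seqLE_of_len_le hg hf hgp hfp)

lemma eq_of_isLeaf {T : Set (PreSeq κ)} (hT : ∀ f ∈ T, IsSeq κ f) {ℓ₁ ℓ₂ f : PreSeq κ}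
    (h₁ : IsLeaf T ℓ₁) (h₂ : IsLeaf T ℓ₂) (hle₁ : seqLE ℓ₁ f) (hle₂ : seqLE ℓ₂ f) : ℓ₁ = ℓ₂ := by
  rcases seqLE_total_of_seqLE (hT _ h₁.1) (hT _ h₂.1) hle₁ hle₂ with h | h
  · exact (h₁.2 ℓ₂ h₂.1 h).symm
  · exact h₂.2 ℓ₁ h₁.1 h

lemma seqSup_eq_some_iff {c : Set (PreSeq κ)} (hc : IsChain seqLE c) {γ : Ordinal} {x : O κ} :
    seqSup c γ = some x ↔ ∃ f ∈ c, f γ = some x := by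
  unfold seqSup
  split_ifs with h
  · obtain ⟨f, hf, hfγ⟩ := h.choose_spec
    refine ⟨fun hx => ⟨f, hf, Option.some_inj.1 hx ▸ hfγ⟩, fun ⟨g, hg, hgγ⟩ => ?_⟩
    rw [eq_of_isChain hc hf hg hfγ hgγ]
  · exact ⟨nofun, fun ⟨f, hf, hfγ⟩ => absurd ⟨x, f, hf, hfγ⟩ h⟩

lemma le_seqSup {c : Set (PreSeq κ)} (hc : IsChain seqLE c) {f : PreSeq κ} (hf : f ∈ c) :
    seqLE f (seqSup c) :=
  fun _ _ hx => (seqSup_eq_some_iff hc).2 ⟨f, hf, hx⟩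

lemma seqSup_eq_of_forall_seqLE {c : Set (PreSeq κ)} (hc : IsChain seqLE c) {m : PreSeq κ}
    (hm : m ∈ c) (hub : ∀ f ∈ c, seqLE f m) : seqSup c = m :=
  seqLE.antisymm (fun γ x hx => by
    obtain ⟨f, hf, hfγ⟩ := (seqSup_eq_some_iff hc).1 hx
    exact hub f hf γ x hfγ) (le_seqSup hc hm)

lemma seqSup_eq_seqSup_of_cofinal {c d : Set (PreSeq κ)} (hc : IsChain seqLE c) (hdc : d ⊆ c)
    (hcof : ∀ f ∈ c, ∃ g ∈ d, seqLE f g) : seqSup c = seqSup d := by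
  refine funext fun γ => Option.ext fun x => ?_
  rw [seqSup_eq_some_iff hc, seqSup_eq_some_iff (hc.mono hdc)]
  constructor
  · rintro ⟨f, hf, hfγ⟩
    obtain ⟨g, hg, hfg⟩ := hcof f hf
    exact ⟨g, hg, hfg γ x hfγ⟩
  · rintro ⟨g, hg, hgγ⟩
    exact ⟨g, hdc hg, hgγ⟩

end Sequences

section Concatenation

variable {κ : Cardinal.{0}}

def appendSeq (ℓ f : PreSeq κ) : PreSeq κ :=
  fun γ => if γ < len ℓ then ℓ γ else f (γ - len ℓ)

def shiftSeq (ℓ f : PreSeq κ) : PreSeq κ := fun γ => f (len ℓ + γ)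

lemma appendSeq_of_lt {ℓ f : PreSeq κ} {γ : Ordinal} (h : γ < len ℓ) :
    appendSeq ℓ f γ = ℓ γ := if_pos h

lemma appendSeq_of_not_lt {ℓ f : PreSeq κ} {γ : Ordinal} (h : ¬ γ < len ℓ) :
    appendSeq ℓ f γ = f (γ - len ℓ) := if_neg h

@[simp]
lemma shiftSeq_appendSeq (ℓ f : PreSeq κ) : shiftSeq ℓ (appendSeq ℓ f) = f :=
  funext fun γ => by
    rw [shiftSeq, appendSeq_of_not_lt (by simp), Ordinal.add_sub_cancel]

lemma appendSeq_injective (ℓ : PreSeq κ) : Function.Injective (appendSeq ℓ) :=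
  Function.LeftInverse.injective (shiftSeq_appendSeq ℓ)

lemma seqLE_appendSeq {ℓ : PreSeq κ} (hℓ : IsSeq κ ℓ) (f : PreSeq κ) :
    seqLE ℓ (appendSeq ℓ f) := fun γ x hx => by
  rwa [appendSeq_of_lt ((isSome_iff_lt_len hℓ γ).1 (Option.isSome_of_eq_some hx))]

lemma appendSeq_shiftSeq {ℓ f : PreSeq κ} (hℓ : IsSeq κ ℓ) (hℓf : seqLE ℓ f) :
    appendSeq ℓ (shiftSeq ℓ f) = f := by
  funext γ
  by_cases h : γ < len ℓ
  · obtain ⟨y, hy⟩ := Option.isSome_iff_exists.1 ((isSome_iff_lt_len hℓ γ).2 h)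
    rw [appendSeq_of_lt h, hy, hℓf γ y hy]
  · rw [appendSeq_of_not_lt h, shiftSeq, Ordinal.add_sub_cancel_of_le (not_lt.1 h)]

lemma shiftSeq_self {ℓ : PreSeq κ} (hℓ : IsSeq κ ℓ) : shiftSeq ℓ ℓ = seqRoot κ :=
  funext fun γ => Option.not_isSome_iff_eq_none.1 <| by
    rw [shiftSeq, isSome_iff_lt_len hℓ]
    exact le_self_add.not_gt

lemma appendSeq_seqRoot {ℓ : PreSeq κ} (hℓ : IsSeq κ ℓ) : appendSeq ℓ (seqRoot κ) = ℓ := by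
  simpa [shiftSeq_self hℓ] using appendSeq_shiftSeq hℓ (seqLE_refl ℓ)

lemma shiftSeq_injOn {ℓ : PreSeq κ} (hℓ : IsSeq κ ℓ) : InjOn (shiftSeq ℓ) {f | seqLE ℓ f} :=
  fun f hf g hg hfg => by rw [← appendSeq_shiftSeq hℓ hf, hfg, appendSeq_shiftSeq hℓ hg]

lemma shiftSeq_mono (ℓ : PreSeq κ) {f g : PreSeq κ} (h : seqLE f g) :
    seqLE (shiftSeq ℓ f) (shiftSeq ℓ g) :=
  fun _ x hx => h _ x hx

lemma appendSeq_seqLE_appendSeq {ℓ f g : PreSeq κ} :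
    seqLE (appendSeq ℓ f) (appendSeq ℓ g) ↔ seqLE f g := by
  refine ⟨fun h => ?_, fun h γ x hx => ?_⟩
  · simpa using shiftSeq_mono ℓ h
  · by_cases hγ : γ < len ℓ
    · rwa [appendSeq_of_lt hγ] at hx ⊢
    · rw [appendSeq_of_not_lt hγ] at hx ⊢
      exact h _ x hx

lemma isSeq_shiftSeq (ℓ : PreSeq κ) {f : PreSeq κ} (hf : IsSeq κ f) :
    IsSeq κ (shiftSeq ℓ f) :=
  ⟨len f - len ℓ, (Ordinal.sub_le_self _ _).trans_lt (len_lt hf), fun γ => by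
    rw [shiftSeq, isSome_iff_lt_len hf, Ordinal.lt_sub]⟩

lemma isSeq_appendSeq (hκ : ℵ₀ ≤ κ) {ℓ f : PreSeq κ} (hℓ : IsSeq κ ℓ) (hf : IsSeq κ f) :
    IsSeq κ (appendSeq ℓ f) := by
  have hlen : len ℓ + len f < κ.ord := by
    have := Cardinal.add_lt_of_lt hκ (Cardinal.lt_ord.1 (len_lt hℓ)) (Cardinal.lt_ord.1 (len_lt hf))
    rwa [← Ordinal.card_add, ← Cardinal.lt_ord] at this
  refine ⟨len ℓ + len f, hlen, fun γ => ?_⟩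
  by_cases h : γ < len ℓ
  · rw [appendSeq_of_lt h, isSome_iff_lt_len hℓ]
    exact iff_of_true h (h.trans_le le_self_add)
  · rw [appendSeq_of_not_lt h, isSome_iff_lt_len hf, ← add_lt_add_iff_left (len ℓ),
      Ordinal.add_sub_cancel_of_le (not_lt.1 h)]

lemma seqSup_image_appendSeq {ℓ : PreSeq κ} {d : Set (PreSeq κ)} (hd : IsChain seqLE d)
    (hne : d.Nonempty) : seqSup (appendSeq ℓ '' d) = appendSeq ℓ (seqSup d) := by
  have hd' : IsChain seqLE (appendSeq ℓ '' d) :=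
    hd.image_of_map_rel _ _ (appendSeq ℓ) fun _ _ => appendSeq_seqLE_appendSeq.2
  refine funext fun γ => Option.ext fun x => ?_
  rw [seqSup_eq_some_iff hd']
  by_cases h : γ < len ℓ
  · obtain ⟨f, hf⟩ := hne
    simp only [appendSeq_of_lt h, mem_image, exists_exists_and_eq_and]
    exact ⟨fun ⟨_, _, hx⟩ => hx, fun hx => ⟨f, hf, hx⟩⟩
  · simp only [appendSeq_of_not_lt h, mem_image, exists_exists_and_eq_and,
      seqSup_eq_some_iff hd]

lemma seqSup_eq_appendSeq {ℓ : PreSeq κ} (hℓ : IsSeq κ ℓ) {c : Set (PreSeq κ)}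
    (hc : IsChain seqLE c) {a : PreSeq κ} (ha : a ∈ c) (hℓa : seqLE ℓ a) :
    seqSup c = appendSeq ℓ (seqSup (shiftSeq ℓ '' {f ∈ c | seqLE ℓ f})) := by
  have hcof : ∀ f ∈ c, ∃ g ∈ {f ∈ c | seqLE ℓ f}, seqLE f g := fun f hf =>
    (hc.total hf ha).elim (fun h => ⟨a, ⟨ha, hℓa⟩, h⟩) fun h => ⟨f, ⟨hf, hℓa.trans h⟩, seqLE_refl f⟩
  have hsub : IsChain seqLE {f ∈ c | seqLE ℓ f} := hc.mono fun _ hf => hf.1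
  have himage : appendSeq ℓ '' (shiftSeq ℓ '' {f ∈ c | seqLE ℓ f}) = {f ∈ c | seqLE ℓ f} := by
    rw [image_image]
    exact (image_congr fun f hf => appendSeq_shiftSeq hℓ hf.2).trans (image_id _)
  rw [seqSup_eq_seqSup_of_cofinal hc (fun _ hf => hf.1) hcof, ← seqSup_image_appendSeq
    (hsub.image_of_map_rel _ _ (shiftSeq ℓ) fun _ _ => shiftSeq_mono ℓ)
    ⟨_, mem_image_of_mem _ ⟨ha, hℓa⟩⟩, himage]

end Concatenation

section Strategies

variable {κ : Cardinal.{0}} {Z : Type*} {Basic : Set (Set Z)}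

def IsLegalStrategy (code : BorelStarCode κ Z Basic) (σ : PreSeq κ → PreSeq κ) : Prop :=
  ∀ f, Reach code σ f → code.h f = BLabel.union → ImmSucc code.T f (σ f)

def IsWinningStrategy (code : BorelStarCode κ Z Basic) (x : Z) (σ : PreSeq κ → PreSeq κ) :
    Prop :=
  IsLegalStrategy code σ ∧ ∀ f s, Reach code σ f → code.h f = BLabel.leaf s → x ∈ s

lemma BorelStarCode.isLeaf_iff (code : BorelStarCode κ Z Basic) {f : PreSeq κ}
    (hf : f ∈ code.T) : IsLeaf code.T f ↔ ∃ s, code.h f = BLabel.leaf s := by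
  refine ⟨fun hl => ?_, fun ⟨s, hs⟩ => by_contra fun hnl => ?_⟩
  · obtain ⟨s, -, hs⟩ := code.label_leaf f hf hl
    exact ⟨s, hs⟩
  · rcases code.label_node f hf hnl with h | h <;> rw [hs] at h <;> cases h

lemma BorelStarCode.not_isLeaf_of_h_eq (code : BorelStarCode κ Z Basic) {f : PreSeq κ}
    (hf : f ∈ code.T) (h : code.h f = BLabel.inter ∨ code.h f = BLabel.union) :
    ¬ IsLeaf code.T f := fun hl => by
  obtain ⟨s, hs⟩ := (code.isLeaf_iff hf).1 hl
  rcases h with h | h <;> rw [hs] at h <;> cases h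

end Strategies

section DepthOne

variable {κ : Cardinal.{0}} {Z : Type*} {Basic : Set (Set Z)}

lemma nonempty_O (hκ : ℵ₀ ≤ κ) : Nonempty (O κ) :=
  ⟨⟨0, zero_lt_one.trans (one_lt_ord hκ)⟩⟩

def single (a : O κ) : PreSeq κ := fun γ => if γ = 0 then some a else none

lemma single_zero (a : O κ) : single a 0 = some a := if_pos rfl

lemma isSeq_single (hκ : ℵ₀ ≤ κ) (a : O κ) : IsSeq κ (single a) :=
  ⟨1, one_lt_ord hκ, fun γ => by by_cases h : γ = 0 <;> simp [single, h]⟩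

lemma single_ne_seqRoot (a : O κ) : single a ≠ seqRoot κ :=
  fun h => nomatch (single_zero a).symm.trans (congrFun h 0)

lemma eq_of_single_seqLE_single {a b : O κ} (h : seqLE (single a) (single b)) : a = b :=
  Option.some_inj.1 ((h 0 a (single_zero a)).symm.trans (single_zero b))

lemma single_injective : Function.Injective (single (κ := κ)) :=
  fun _ _ h => eq_of_single_seqLE_single (h ▸ seqLE_refl _)

lemma eq_seqRoot_or_eq_single {f : PreSeq κ} {a : O κ} (h : seqLE f (single a)) :
    f = seqRoot κ ∨ f = single a := by
  have hsupp : ∀ γ x, f γ = some x → γ = 0 ∧ x = a := fun γ x hx => by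
    have := h γ x hx
    by_cases hγ : γ = 0
    · simp_all [single]
    · simp [single, hγ] at this
  cases hf : f 0 with
  | none =>
    refine Or.inl (funext fun γ => Option.ext fun x => ⟨fun hx => ?_, nofun⟩)
    obtain ⟨rfl, -⟩ := hsupp γ x hx
    rw [hf] at hx
    cases hx
  | some y =>
    refine Or.inr (funext fun γ => Option.ext fun x => ⟨h γ x, fun hx => ?_⟩)
    have hγx : γ = 0 ∧ x = a := by by_cases hγ : γ = 0 <;> simp_all [single]
    rw [hγx.1, hf, (hsupp 0 y hf).2, hγx.2]

def depthOneTree (κ : Cardinal.{0}) : Set (PreSeq κ) := insert (seqRoot κ) (range single)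

lemma eq_seqRoot_or_eq_of_seqLE {f g : PreSeq κ} (hf : f ∈ depthOneTree κ) (hgf : seqLE g f) :
    g = seqRoot κ ∨ g = f := by
  rcases hf with rfl | ⟨a, rfl⟩
  · exact Or.inl (eq_seqRoot_of_seqLE hgf)
  · exact eq_seqRoot_or_eq_single hgf

lemma isLeaf_single (a : O κ) : IsLeaf (depthOneTree κ) (single a) := by
  refine ⟨Or.inr ⟨a, rfl⟩, ?_⟩
  rintro g (rfl | ⟨b, rfl⟩) hle
  · exact absurd (eq_seqRoot_of_seqLE hle) (single_ne_seqRoot a)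
  · rw [eq_of_single_seqLE_single hle]

lemma not_isLeaf_seqRoot [Nonempty (O κ)] : ¬ IsLeaf (depthOneTree κ) (seqRoot κ) :=
  fun h => single_ne_seqRoot (Classical.arbitrary _)
    (h.2 _ (Or.inr ⟨_, rfl⟩) (seqRoot_seqLE _))

lemma immSucc_seqRoot_single (a : O κ) : ImmSucc (depthOneTree κ) (seqRoot κ) (single a) :=
  ⟨Or.inr ⟨a, rfl⟩, seqRoot_seqLE _, (single_ne_seqRoot a).symm, fun _ _ _ hp =>
    eq_seqRoot_or_eq_single hp⟩

lemma seqSup_mem_of_subset_depthOneTree {c : Set (PreSeq κ)} (hc : c ⊆ depthOneTree κ)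
    (hne : c.Nonempty) (hchain : IsChain seqLE c) : seqSup c ∈ c := by
  by_cases hs : ∃ a, single a ∈ c
  · obtain ⟨a, ha⟩ := hs
    rw [seqSup_eq_of_forall_seqLE hchain ha fun f hf => ?_]
    · exact ha
    rcases hc hf with rfl | ⟨b, rfl⟩
    · exact seqRoot_seqLE _
    · rcases hchain.total hf ha with h | h
      · exact h
      · exact eq_of_single_seqLE_single h ▸ seqLE_refl _
  · have hroot : ∀ f ∈ c, f = seqRoot κ := fun f hf =>
      (hc hf).resolve_right fun ⟨a, ha⟩ => hs ⟨a, ha ▸ hf⟩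
    obtain ⟨f, hf⟩ := hne
    rw [seqSup_eq_of_forall_seqLE hchain hf fun g hg => hroot g hg ▸ seqRoot_seqLE f]
    exact hf

/-- A chain in `depthOneTree κ` lies below its supremum, hence has at most two elements. -/
lemma finite_of_subset_depthOneTree {c : Set (PreSeq κ)} (hc : c ⊆ depthOneTree κ)
    (hchain : IsChain seqLE c) : c.Finite := by
  rcases c.eq_empty_or_nonempty with rfl | hne
  · exact finite_empty
  refine (toFinite {seqRoot κ, seqSup c}).subset fun f hf => ?_
  exact eq_seqRoot_or_eq_of_seqLE (hc (seqSup_mem_of_subset_depthOneTree hc hne hchain))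
    (le_seqSup hchain hf)

lemma mk_depthOneTree_le (hκ : ℵ₀ ≤ κ) : #(depthOneTree κ) ≤ Cardinal.lift.{1} κ :=
  calc #(depthOneTree κ) ≤ #(range (single (κ := κ))) + 1 := Cardinal.mk_insert_le
    _ ≤ Cardinal.lift.{1} κ + 1 := by
      gcongr
      exact Cardinal.mk_range_le.trans (mk_O κ).le
    _ = Cardinal.lift.{1} κ := Cardinal.add_one_eq (Cardinal.aleph0_le_lift.2 hκ)

open scoped Classical in
def depthOneLabel (op : BLabel Z) (B : O κ → Set Z) (f : PreSeq κ) : BLabel Z :=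
  if h : ∃ a, f = single a then BLabel.leaf (B h.choose) else op

lemma depthOneLabel_single (op : BLabel Z) (B : O κ → Set Z) (a : O κ) :
    depthOneLabel op B (single a) = BLabel.leaf (B a) := by
  have h : ∃ b, single a = single b := ⟨a, rfl⟩
  rw [depthOneLabel, dif_pos h, ← single_injective h.choose_spec]

lemma depthOneLabel_seqRoot (op : BLabel Z) (B : O κ → Set Z) :
    depthOneLabel op B (seqRoot κ) = op :=
  dif_neg fun ⟨a, ha⟩ => single_ne_seqRoot a ha.symm

def depthOneCode (hκ : ℵ₀ ≤ κ) (op : BLabel Z) (hop : op = BLabel.inter ∨ op = BLabel.union)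
    (B : O κ → Set Z) (hB : ∀ a, B a ∈ Basic) : BorelStarCode κ Z Basic where
  T := depthOneTree κ
  h := depthOneLabel op B
  mem_isSeq := by
    rintro f (rfl | ⟨a, rfl⟩)
    exacts [isSeq_seqRoot hκ, isSeq_single hκ a]
  root_mem := mem_insert _ _
  downward f hf g _ hgf := by
    rcases eq_seqRoot_or_eq_of_seqLE hf hgf with rfl | rfl
    exacts [mem_insert _ _, hf]
  card_le := mk_depthOneTree_le hκ
  no_long_chain c hc hchain :=
    (finite_of_subset_depthOneTree hc hchain).lt_aleph0.trans_le
      (Cardinal.aleph0_le_lift.2 hκ)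
  chain_sup c hc hne hchain := hc (seqSup_mem_of_subset_depthOneTree hc hne hchain)
  label_leaf := by
    have := nonempty_O hκ
    rintro f (rfl | ⟨a, rfl⟩) hleaf
    · exact absurd hleaf not_isLeaf_seqRoot
    · exact ⟨B a, hB a, depthOneLabel_single op B a⟩
  label_node := by
    rintro f (rfl | ⟨a, rfl⟩) hnl
    · rwa [depthOneLabel_seqRoot]
    · exact absurd (isLeaf_single a) hnl

end DepthOne

section DepthOneGames

variable {κ : Cardinal.{0}} {Z : Type*} {Basic : Set (Set Z)} (hκ : ℵ₀ ≤ κ) (B : O κ → Set Z)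
  (hB : ∀ a, B a ∈ Basic)

lemma setOf_iIWinsBStar_depthOneCode_union :
    {x | IIWinsBStar (depthOneCode hκ BLabel.union (Or.inr rfl) B hB) x} = ⋃ a, B a := by
  set code := depthOneCode hκ BLabel.union (Or.inr rfl) B hB
  have hroot : code.h (seqRoot κ) = BLabel.union := depthOneLabel_seqRoot _ B
  ext x
  simp only [mem_ofPred_eq, mem_iUnion]
  constructor
  · rintro ⟨σ, hσ, hwin⟩
    obtain ⟨a, ha⟩ : ∃ a, single a = σ (seqRoot κ) :=
      ((hσ _ Reach.root hroot).1).resolve_left (hσ _ Reach.root hroot).2.2.1.symm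
    exact ⟨a, hwin _ _ (Reach.union _ Reach.root hroot) (ha ▸ depthOneLabel_single _ B a)⟩
  · rintro ⟨a, hx⟩
    have hreach : ∀ f, Reach code (fun _ => single a) f → f ∈ ({seqRoot κ, single a} : Set _) := by
      intro f hf
      induction hf with
      | root => exact mem_insert _ _
      | inter f g _ hlbl _ ih =>
        rcases ih with rfl | rfl
        · exact absurd (hroot.symm.trans hlbl) nofun
        · exact absurd ((depthOneLabel_single _ B a).symm.trans hlbl) nofun
      | union => exact mem_insert_of_mem _ rfl
      | lim c hne hchain _ ih =>
        have hc : c ⊆ depthOneTree κ := fun f hf => by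
          rcases ih f hf with rfl | rfl
          exacts [mem_insert _ _, Or.inr ⟨a, rfl⟩]
        exact ih _ (seqSup_mem_of_subset_depthOneTree hc hne hchain)
    refine ⟨fun _ => single a, fun f hf hs => ?_, fun f s hf hs => ?_⟩
    · rcases hreach f hf with rfl | rfl
      · exact immSucc_seqRoot_single a
      · exact absurd ((depthOneLabel_single _ B a).symm.trans hs) nofun
    rcases hreach f hf with rfl | rfl
    · exact absurd (hroot.symm.trans hs) nofun
    · exact BLabel.leaf.inj ((depthOneLabel_single _ B a).symm.trans hs) ▸ hx

lemma setOf_iIWinsBStar_depthOneCode_inter :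
    {x | IIWinsBStar (depthOneCode hκ BLabel.inter (Or.inl rfl) B hB) x} = ⋂ a, B a := by
  set code := depthOneCode hκ BLabel.inter (Or.inl rfl) B hB
  have hroot : code.h (seqRoot κ) = BLabel.inter := depthOneLabel_seqRoot _ B
  ext x
  simp only [mem_ofPred_eq, mem_iInter]
  constructor
  · rintro ⟨σ, -, hwin⟩ a
    exact hwin _ _ (Reach.inter _ _ Reach.root hroot (immSucc_seqRoot_single a))
      (depthOneLabel_single _ B a)
  · intro hx
    have hreach : ∀ f, Reach code id f → f ∈ depthOneTree κ := by
      intro f hf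
      induction hf with
      | root => exact code.root_mem
      | inter _ _ _ _ hsucc => exact hsucc.1
      | union _ _ _ ih => exact ih
      | lim c hne hchain _ ih => exact ih _ (seqSup_mem_of_subset_depthOneTree ih hne hchain)
    refine ⟨id, fun f hf hs => ?_, fun f s hf hs => ?_⟩
    · rcases hreach f hf with rfl | ⟨a, rfl⟩
      · exact absurd (hroot.symm.trans hs) nofun
      · exact absurd ((depthOneLabel_single _ B a).symm.trans hs) nofun
    · rcases hreach f hf with rfl | ⟨a, rfl⟩
      · exact absurd (hroot.symm.trans hs) nofun
      · exact BLabel.leaf.inj ((depthOneLabel_single _ B a).symm.trans hs) ▸ hx a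

end DepthOneGames

lemma isBorelStar_of_mem {κ : Cardinal.{0}} {Z : Type*} {Basic : Set (Set Z)} (hκ : ℵ₀ ≤ κ)
    {s : Set Z} (hs : s ∈ Basic) : IsBorelStar κ Basic s := by
  have := nonempty_O hκ
  refine ⟨depthOneCode hκ BLabel.union (Or.inr rfl) (fun _ => s) fun _ => hs, ?_⟩
  rw [setOf_iIWinsBStar_depthOneCode_union, iUnion_const]

section Graft

variable {κ : Cardinal.{0}} {Z : Type*} {Basic Basic' : Set (Set Z)}
  (code : BorelStarCode κ Z Basic') (C : PreSeq κ → BorelStarCode κ Z Basic)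

def graftT : Set (PreSeq κ) :=
  code.T ∪ {f | ∃ ℓ, IsLeaf code.T ℓ ∧ ∃ g ∈ (C ℓ).T, f = appendSeq ℓ g}

lemma choose_eq_of_isLeaf {f ℓ : PreSeq κ} (h : ∃ ℓ, IsLeaf code.T ℓ ∧ seqLE ℓ f)
    (hℓ : IsLeaf code.T ℓ) (hle : seqLE ℓ f) : h.choose = ℓ :=
  eq_of_isLeaf code.mem_isSeq h.choose_spec.1 hℓ h.choose_spec.2 hle

lemma not_exists_isLeaf_seqLE {f : PreSeq κ} (hf : f ∈ code.T) (hnl : ¬ IsLeaf code.T f) :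
    ¬ ∃ ℓ, IsLeaf code.T ℓ ∧ seqLE ℓ f :=
  fun ⟨_, hℓ, hle⟩ => hnl (hℓ.2 _ hf hle ▸ hℓ)

open scoped Classical in
def grafth (f : PreSeq κ) : BLabel Z :=
  if h : ∃ ℓ, IsLeaf code.T ℓ ∧ seqLE ℓ f then (C h.choose).h (shiftSeq h.choose f)
  else code.h f

lemma grafth_of_seqLE {ℓ f : PreSeq κ} (hℓ : IsLeaf code.T ℓ) (hle : seqLE ℓ f) :
    grafth code C f = (C ℓ).h (shiftSeq ℓ f) := by
  have h : ∃ ℓ, IsLeaf code.T ℓ ∧ seqLE ℓ f := ⟨ℓ, hℓ, hle⟩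
  rw [grafth, dif_pos h, choose_eq_of_isLeaf code h hℓ hle]

lemma grafth_of_not_isLeaf {f : PreSeq κ} (hf : f ∈ code.T) (hnl : ¬ IsLeaf code.T f) :
    grafth code C f = code.h f :=
  dif_neg (not_exists_isLeaf_seqLE code hf hnl)

lemma seqLE_appendSeq_of_isLeaf {ℓ : PreSeq κ} (hℓ : IsLeaf code.T ℓ) (g : PreSeq κ) :
    seqLE ℓ (appendSeq ℓ g) :=
  seqLE_appendSeq (code.mem_isSeq ℓ hℓ.1) g

lemma grafth_appendSeq {ℓ : PreSeq κ} (hℓ : IsLeaf code.T ℓ) (g : PreSeq κ) :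
    grafth code C (appendSeq ℓ g) = (C ℓ).h g := by
  rw [grafth_of_seqLE code C hℓ (seqLE_appendSeq_of_isLeaf code hℓ g), shiftSeq_appendSeq]

lemma appendSeq_mem_graftT {ℓ g : PreSeq κ} (hℓ : IsLeaf code.T ℓ) (hg : g ∈ (C ℓ).T) :
    appendSeq ℓ g ∈ graftT code C :=
  Or.inr ⟨ℓ, hℓ, g, hg, rfl⟩

lemma shiftSeq_mem_of_mem_graftT {f ℓ : PreSeq κ} (hf : f ∈ graftT code C)
    (hℓ : IsLeaf code.T ℓ) (hle : seqLE ℓ f) : shiftSeq ℓ f ∈ (C ℓ).T := by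
  rcases hf with hf | ⟨ℓ', hℓ', g, hg, rfl⟩
  · rw [hℓ.2 _ hf hle, shiftSeq_self (code.mem_isSeq ℓ hℓ.1)]
    exact (C ℓ).root_mem
  · obtain rfl := eq_of_isLeaf code.mem_isSeq hℓ hℓ' hle (seqLE_appendSeq_of_isLeaf code hℓ' g)
    rwa [shiftSeq_appendSeq]

lemma exists_isLeaf_seqLE_of_not_mem {f : PreSeq κ} (hf : f ∈ graftT code C) (hfT : f ∉ code.T) :
    ∃ ℓ, IsLeaf code.T ℓ ∧ seqLE ℓ f := by
  obtain ⟨ℓ, hℓ, g, -, rfl⟩ := hf.resolve_left hfT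
  exact ⟨ℓ, hℓ, seqLE_appendSeq_of_isLeaf code hℓ g⟩

lemma immSucc_graftT_of_immSucc {f g : PreSeq κ} (h : ImmSucc code.T f g) :
    ImmSucc (graftT code C) f g := by
  refine ⟨Or.inl h.1, h.2.1, h.2.2.1, ?_⟩
  rintro p (hp | ⟨ℓ, hℓ, q, -, rfl⟩) hfp hpg
  · exact h.2.2.2 p hp hfp hpg
  · have hgℓ : g = ℓ :=
      hℓ.2 _ h.1 ((seqLE_appendSeq_of_isLeaf code hℓ q).trans hpg)
    have hpℓ : appendSeq ℓ q = ℓ := seqLE.antisymm (hgℓ ▸ hpg) (seqLE_appendSeq_of_isLeaf code hℓ q)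
    rw [hpℓ] at hfp ⊢
    exact h.2.2.2 ℓ hℓ.1 hfp (hgℓ ▸ seqLE_refl g)

lemma immSucc_of_immSucc_graftT {f g : PreSeq κ} (hg : g ∈ code.T)
    (h : ImmSucc (graftT code C) f g) : ImmSucc code.T f g :=
  ⟨hg, h.2.1, h.2.2.1, fun p hp => h.2.2.2 p (Or.inl hp)⟩

lemma mem_of_immSucc_graftT {f g : PreSeq κ} (hf : f ∈ code.T) (hnl : ¬ IsLeaf code.T f)
    (h : ImmSucc (graftT code C) f g) : g ∈ code.T := by
  by_contra hgT
  obtain ⟨ℓ, hℓ, hℓg⟩ := exists_isLeaf_seqLE_of_not_mem code C h.1 hgT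
  rcases seqLE_total_of_seqLE (code.mem_isSeq f hf) (code.mem_isSeq ℓ hℓ.1) h.2.1 hℓg with
    hfℓ | hℓf
  · rcases h.2.2.2 ℓ (Or.inl hℓ.1) hfℓ hℓg with rfl | rfl
    exacts [hnl hℓ, hgT hℓ.1]
  · exact not_exists_isLeaf_seqLE code hf hnl ⟨ℓ, hℓ, hℓf⟩

lemma immSucc_graftT_appendSeq_iff {ℓ a b : PreSeq κ} (hℓ : IsLeaf code.T ℓ)
    (hb : b ∈ (C ℓ).T) :
    ImmSucc (graftT code C) (appendSeq ℓ a) (appendSeq ℓ b) ↔ ImmSucc (C ℓ).T a b := by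
  have hℓseq := code.mem_isSeq ℓ hℓ.1
  refine ⟨fun h => ⟨hb, appendSeq_seqLE_appendSeq.1 h.2.1, fun hab => h.2.2.1 (hab ▸ rfl),
    fun p hp hap hpb => ?_⟩, fun h => ⟨appendSeq_mem_graftT code C hℓ hb,
    appendSeq_seqLE_appendSeq.2 h.2.1, fun hab => h.2.2.1 (appendSeq_injective ℓ hab),
    fun p hp hap hpb => ?_⟩⟩
  · exact (h.2.2.2 _ (appendSeq_mem_graftT code C hℓ hp) (appendSeq_seqLE_appendSeq.2 hap)
      (appendSeq_seqLE_appendSeq.2 hpb)).imp (appendSeq_injective ℓ ·) (appendSeq_injective ℓ ·)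
  · have hℓp : seqLE ℓ p := (seqLE_appendSeq hℓseq a).trans hap
    rw [← appendSeq_shiftSeq hℓseq hℓp] at hap hpb ⊢
    exact (h.2.2.2 _ (shiftSeq_mem_of_mem_graftT code C hp hℓ hℓp)
      (appendSeq_seqLE_appendSeq.1 hap) (appendSeq_seqLE_appendSeq.1 hpb)).imp
      (congrArg _) (congrArg _)

lemma graftT_downward {f g : PreSeq κ} (hf : f ∈ graftT code C) (hg : IsSeq κ g)
    (hgf : seqLE g f) : g ∈ graftT code C := by
  rcases hf with hf | ⟨ℓ, hℓ, q, hq, rfl⟩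
  · exact Or.inl (code.downward f hf g hg hgf)
  have hℓseq := code.mem_isSeq ℓ hℓ.1
  rcases seqLE_total_of_seqLE hg hℓseq hgf (seqLE_appendSeq hℓseq q) with hgℓ | hℓg
  · exact Or.inl (code.downward ℓ hℓ.1 g hg hgℓ)
  · have hsh : seqLE (shiftSeq ℓ g) q := by simpa using shiftSeq_mono ℓ hgf
    exact Or.inr ⟨ℓ, hℓ, _, (C ℓ).downward q hq _ (isSeq_shiftSeq ℓ hg) hsh,
      (appendSeq_shiftSeq hℓseq hℓg).symm⟩

lemma mk_graftT_le (hκ : ℵ₀ ≤ κ) : #(graftT code C) ≤ Cardinal.lift.{1} κ := by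
  have hκ' : ℵ₀ ≤ Cardinal.lift.{1} κ := Cardinal.aleph0_le_lift.2 hκ
  have hsub : {f | ∃ ℓ, IsLeaf code.T ℓ ∧ ∃ g ∈ (C ℓ).T, f = appendSeq ℓ g} ⊆
      ⋃ ℓ ∈ {ℓ | IsLeaf code.T ℓ}, appendSeq ℓ '' (C ℓ).T := by
    rintro _ ⟨ℓ, hℓ, g, hg, rfl⟩
    exact mem_biUnion hℓ (mem_image_of_mem _ hg)
  calc #(graftT code C)
      ≤ #code.T + #(⋃ ℓ ∈ {ℓ | IsLeaf code.T ℓ}, appendSeq ℓ '' (C ℓ).T) :=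
        (Cardinal.mk_union_le _ _).trans (add_le_add_right (Cardinal.mk_le_mk_of_subset hsub) _)
    _ ≤ Cardinal.lift.{1} κ + Cardinal.lift.{1} κ * Cardinal.lift.{1} κ := by
        gcongr
        · exact code.card_le
        refine (Cardinal.mk_biUnion_le _ _).trans (mul_le_mul' ?_ ?_)
        · exact (Cardinal.mk_le_mk_of_subset fun ℓ hℓ => hℓ.1).trans code.card_le
        · exact ciSup_le' fun ℓ => Cardinal.mk_image_le.trans (C ℓ).card_le
    _ = Cardinal.lift.{1} κ := by
        rw [Cardinal.mul_eq_self hκ', Cardinal.add_eq_self hκ']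

lemma seqLE_of_mem_chain {c : Set (PreSeq κ)} (hc : c ⊆ graftT code C)
    (hchain : IsChain seqLE c) {a ℓ f : PreSeq κ} (ha : a ∈ c) (hℓ : IsLeaf code.T ℓ)
    (hℓa : seqLE ℓ a) (hf : f ∈ c) (hfT : f ∉ code.T) : seqLE ℓ f := by
  obtain ⟨ℓ', hℓ', hℓ'f⟩ := exists_isLeaf_seqLE_of_not_mem code C (hc hf) hfT
  rcases hchain.total hf ha with hfa | haf
  · rwa [eq_of_isLeaf code.mem_isSeq hℓ hℓ' hℓa (hℓ'f.trans hfa)]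
  · exact hℓa.trans haf

lemma image_shiftSeq_subset {c : Set (PreSeq κ)} (hc : c ⊆ graftT code C) {ℓ : PreSeq κ}
    (hℓ : IsLeaf code.T ℓ) : shiftSeq ℓ '' {f ∈ c | seqLE ℓ f} ⊆ (C ℓ).T := by
  rintro _ ⟨f, hf, rfl⟩
  exact shiftSeq_mem_of_mem_graftT code C (hc hf.1) hℓ hf.2

lemma isChain_image_shiftSeq {c : Set (PreSeq κ)} (hchain : IsChain seqLE c) (ℓ : PreSeq κ) :
    IsChain seqLE (shiftSeq ℓ '' {f ∈ c | seqLE ℓ f}) :=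
  (hchain.mono fun _ hf => hf.1).image_of_map_rel _ _ (shiftSeq ℓ) fun _ _ => shiftSeq_mono ℓ

lemma mk_chain_graftT_lt (hκ : ℵ₀ ≤ κ) {c : Set (PreSeq κ)} (hc : c ⊆ graftT code C)
    (hchain : IsChain seqLE c) : #c < Cardinal.lift.{1} κ := by
  by_cases hcT : c ⊆ code.T
  · exact code.no_long_chain c hcT hchain
  obtain ⟨a, ha, haT⟩ := not_subset.1 hcT
  obtain ⟨ℓ, hℓ, hℓa⟩ := exists_isLeaf_seqLE_of_not_mem code C (hc ha) haT
  have hsplit : c ⊆ (c ∩ code.T) ∪ {f ∈ c | seqLE ℓ f} := fun f hf =>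
    (em (f ∈ code.T)).imp (⟨hf, ·⟩) fun hfT =>
      ⟨hf, seqLE_of_mem_chain code C hc hchain ha hℓ hℓa hf hfT⟩
  have htail : #{f ∈ c | seqLE ℓ f} < Cardinal.lift.{1} κ := by
    rw [← Cardinal.mk_image_eq_of_injOn _ _
      ((shiftSeq_injOn (code.mem_isSeq ℓ hℓ.1)).mono fun _ hf => hf.2)]
    exact (C ℓ).no_long_chain _ (image_shiftSeq_subset code C hc hℓ)
      (isChain_image_shiftSeq hchain ℓ)
  exact (Cardinal.mk_le_mk_of_subset hsplit).trans_lt <| (Cardinal.mk_union_le _ _).trans_lt <|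
    Cardinal.add_lt_of_lt (Cardinal.aleph0_le_lift.2 hκ)
      (code.no_long_chain _ inter_subset_right (hchain.mono inter_subset_left)) htail

lemma seqSup_mem_graftT {c : Set (PreSeq κ)} (hc : c ⊆ graftT code C) (hne : c.Nonempty)
    (hchain : IsChain seqLE c) : seqSup c ∈ graftT code C := by
  by_cases hcT : c ⊆ code.T
  · exact Or.inl (code.chain_sup c hcT hne hchain)
  obtain ⟨a, ha, haT⟩ := not_subset.1 hcT
  obtain ⟨ℓ, hℓ, hℓa⟩ := exists_isLeaf_seqLE_of_not_mem code C (hc ha) haT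
  rw [seqSup_eq_appendSeq (code.mem_isSeq ℓ hℓ.1) hchain ha hℓa]
  exact appendSeq_mem_graftT code C hℓ <| (C ℓ).chain_sup _ (image_shiftSeq_subset code C hc hℓ)
    ⟨_, mem_image_of_mem _ ⟨ha, hℓa⟩⟩ (isChain_image_shiftSeq hchain ℓ)

lemma isLeaf_graftT_iff {f ℓ : PreSeq κ} (hf : f ∈ graftT code C) (hℓ : IsLeaf code.T ℓ)
    (hle : seqLE ℓ f) : IsLeaf (graftT code C) f ↔ IsLeaf (C ℓ).T (shiftSeq ℓ f) := by
  have hℓseq := code.mem_isSeq ℓ hℓ.1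
  have hfe := appendSeq_shiftSeq hℓseq hle
  refine ⟨fun h => ⟨shiftSeq_mem_of_mem_graftT code C hf hℓ hle, fun g hg hfg => ?_⟩,
    fun h => ⟨hf, fun g hg hfg => ?_⟩⟩
  · refine appendSeq_injective ℓ ((h.2 _ (appendSeq_mem_graftT code C hℓ hg) ?_).trans hfe.symm)
    rwa [← hfe, appendSeq_seqLE_appendSeq]
  · have hℓg := hle.trans hfg
    rw [← appendSeq_shiftSeq hℓseq hℓg, ← hfe,
      h.2 _ (shiftSeq_mem_of_mem_graftT code C hg hℓ hℓg) (shiftSeq_mono ℓ hfg)]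

lemma exists_isLeaf_seqLE_of_isLeaf_graftT {f : PreSeq κ} (h : IsLeaf (graftT code C) f) :
    ∃ ℓ, IsLeaf code.T ℓ ∧ seqLE ℓ f := by
  by_cases hfT : f ∈ code.T
  · exact ⟨f, ⟨hfT, fun g hg => h.2 g (Or.inl hg)⟩, seqLE_refl f⟩
  · exact exists_isLeaf_seqLE_of_not_mem code C h.1 hfT

def graft (hκ : ℵ₀ ≤ κ) : BorelStarCode κ Z Basic where
  T := graftT code C
  h := grafth code C
  mem_isSeq := by
    rintro f (hf | ⟨ℓ, hℓ, g, hg, rfl⟩)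
    · exact code.mem_isSeq f hf
    · exact isSeq_appendSeq hκ (code.mem_isSeq ℓ hℓ.1) ((C ℓ).mem_isSeq g hg)
  root_mem := Or.inl code.root_mem
  downward _ hf g hg hgf := graftT_downward code C hf hg hgf
  card_le := mk_graftT_le code C hκ
  no_long_chain _ hc hchain := mk_chain_graftT_lt code C hκ hc hchain
  chain_sup _ hc hne hchain := seqSup_mem_graftT code C hc hne hchain
  label_leaf f hf hleaf := by
    obtain ⟨ℓ, hℓ, hle⟩ := exists_isLeaf_seqLE_of_isLeaf_graftT code C hleaf
    rw [grafth_of_seqLE code C hℓ hle]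
    exact (C ℓ).label_leaf _ (shiftSeq_mem_of_mem_graftT code C hf hℓ hle)
      ((isLeaf_graftT_iff code C hf hℓ hle).1 hleaf)
  label_node f hf hnl := by
    by_cases h : ∃ ℓ, IsLeaf code.T ℓ ∧ seqLE ℓ f
    · obtain ⟨ℓ, hℓ, hle⟩ := h
      rw [grafth_of_seqLE code C hℓ hle]
      exact (C ℓ).label_node _ (shiftSeq_mem_of_mem_graftT code C hf hℓ hle)
        (mt (isLeaf_graftT_iff code C hf hℓ hle).2 hnl)
    · have hfT : f ∈ code.T := by_contra fun hfT => h (exists_isLeaf_seqLE_of_not_mem code C hf hfT)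
      rw [grafth, dif_neg h]
      exact code.label_node f hfT fun hl => h ⟨f, hl, seqLE_refl f⟩

end Graft

section GraftGames

variable {κ : Cardinal.{0}} {Z : Type*} {Basic Basic' : Set (Set Z)}
  (code : BorelStarCode κ Z Basic') (C : PreSeq κ → BorelStarCode κ Z Basic) (hκ : ℵ₀ ≤ κ)

lemma reach_graft_of_reach {σ : PreSeq κ → PreSeq κ} (hσ : IsLegalStrategy (graft code C hκ) σ)
    {f : PreSeq κ} (h : Reach code σ f) : Reach (graft code C hκ) σ f ∧ f ∈ code.T := by
  induction h with
  | root => exact ⟨Reach.root, code.root_mem⟩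
  | inter f g _ hlbl hsucc ih =>
    have hnl := code.not_isLeaf_of_h_eq ih.2 (Or.inl hlbl)
    exact ⟨Reach.inter f g ih.1 ((grafth_of_not_isLeaf code C ih.2 hnl).trans hlbl)
      (immSucc_graftT_of_immSucc code C hsucc), hsucc.1⟩
  | union f _ hlbl ih =>
    have hnl := code.not_isLeaf_of_h_eq ih.2 (Or.inr hlbl)
    have hlbl' : grafth code C f = BLabel.union := (grafth_of_not_isLeaf code C ih.2 hnl).trans hlbl
    exact ⟨Reach.union f ih.1 hlbl', mem_of_immSucc_graftT code C ih.2 hnl (hσ f ih.1 hlbl')⟩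
  | lim c hne hchain _ ih =>
    exact ⟨Reach.lim c hne hchain fun f hf => (ih f hf).1,
      code.chain_sup c (fun f hf => (ih f hf).2) hne hchain⟩

lemma reach_graft_appendSeq {σ : PreSeq κ → PreSeq κ} (hσ : IsLegalStrategy (graft code C hκ) σ)
    {ℓ : PreSeq κ} (hℓ : IsLeaf code.T ℓ) (hrℓ : Reach (graft code C hκ) σ ℓ) {g : PreSeq κ}
    (h : Reach (C ℓ) (fun g => shiftSeq ℓ (σ (appendSeq ℓ g))) g) :
    Reach (graft code C hκ) σ (appendSeq ℓ g) := by
  have hℓseq := code.mem_isSeq ℓ hℓ.1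
  induction h with
  | root => rwa [appendSeq_seqRoot hℓseq]
  | inter g g' _ hlbl hsucc ih =>
    exact Reach.inter _ _ ih ((grafth_appendSeq code C hℓ g).trans hlbl)
      ((immSucc_graftT_appendSeq_iff code C hℓ hsucc.1).2 hsucc)
  | union g _ hlbl ih =>
    have hlbl' : grafth code C (appendSeq ℓ g) = BLabel.union :=
      (grafth_appendSeq code C hℓ g).trans hlbl
    rw [appendSeq_shiftSeq hℓseq ((seqLE_appendSeq hℓseq g).trans (hσ _ ih hlbl').2.1)]
    exact Reach.union _ ih hlbl'
  | lim d hne hchain _ ih =>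
    rw [← seqSup_image_appendSeq hchain hne]
    exact Reach.lim _ (hne.image _) (hchain.image_of_map_rel _ _ (appendSeq ℓ)
      fun _ _ => appendSeq_seqLE_appendSeq.2) (forall_mem_image.2 ih)

lemma isWinningStrategy_of_reach_graft {x : Z} {σ : PreSeq κ → PreSeq κ}
    (hσ : IsWinningStrategy (graft code C hκ) x σ) {ℓ : PreSeq κ} (hℓ : IsLeaf code.T ℓ)
    (hrℓ : Reach (graft code C hκ) σ ℓ) :
    IsWinningStrategy (C ℓ) x fun g => shiftSeq ℓ (σ (appendSeq ℓ g)) := by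
  have hreach : ∀ {g}, Reach (C ℓ) (fun g => shiftSeq ℓ (σ (appendSeq ℓ g))) g →
      Reach (graft code C hκ) σ (appendSeq ℓ g) :=
    reach_graft_appendSeq code C hκ hσ.1 hℓ hrℓ
  refine ⟨fun g hg hlbl => ?_, fun g s hg hlbl =>
    hσ.2 _ s (hreach hg) ((grafth_appendSeq code C hℓ g).trans hlbl)⟩
  have hmove := hσ.1 _ (hreach hg) ((grafth_appendSeq code C hℓ g).trans hlbl)
  have hℓσ := (seqLE_appendSeq_of_isLeaf code hℓ g).trans hmove.2.1
  have hmem := shiftSeq_mem_of_mem_graftT code C hmove.1 hℓ hℓσ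
  rw [← appendSeq_shiftSeq (code.mem_isSeq ℓ hℓ.1) hℓσ] at hmove
  exact (immSucc_graftT_appendSeq_iff code C hℓ hmem).1 hmove

variable {code C}

lemma iIWinsBStar_of_iIWinsBStar_graft
    (HC : ∀ ℓ s, IsLeaf code.T ℓ → code.h ℓ = BLabel.leaf s → {x | IIWinsBStar (C ℓ) x} = s)
    {x : Z} (h : IIWinsBStar (graft code C hκ) x) : IIWinsBStar code x := by
  obtain ⟨σ, hσ⟩ := h
  refine ⟨σ, fun f hf hlbl => ?_, fun f s hf hlbl => ?_⟩
  · obtain ⟨hr, hfT⟩ := reach_graft_of_reach code C hκ hσ.1 hf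
    have hnl := code.not_isLeaf_of_h_eq hfT (Or.inr hlbl)
    have hmove := hσ.1 f hr ((grafth_of_not_isLeaf code C hfT hnl).trans hlbl)
    exact immSucc_of_immSucc_graftT code C (mem_of_immSucc_graftT code C hfT hnl hmove) hmove
  · obtain ⟨hr, hfT⟩ := reach_graft_of_reach code C hκ hσ.1 hf
    have hℓ : IsLeaf code.T f := (code.isLeaf_iff hfT).2 ⟨s, hlbl⟩
    rw [← HC f s hℓ hlbl]
    exact ⟨_, isWinningStrategy_of_reach_graft code C hκ hσ hℓ hr⟩

end GraftGames

section GraftStrategy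

variable {κ : Cardinal.{0}} {Z : Type*} {Basic Basic' : Set (Set Z)}
  (code : BorelStarCode κ Z Basic') (C : PreSeq κ → BorelStarCode κ Z Basic)

open scoped Classical in
def graftStrat (σ : PreSeq κ → PreSeq κ) (τ : PreSeq κ → PreSeq κ → PreSeq κ) :
    PreSeq κ → PreSeq κ := fun f =>
  if h : ∃ ℓ, IsLeaf code.T ℓ ∧ seqLE ℓ f then
    appendSeq h.choose (τ h.choose (shiftSeq h.choose f))
  else σ f

variable {σ : PreSeq κ → PreSeq κ} {τ : PreSeq κ → PreSeq κ → PreSeq κ}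

lemma graftStrat_of_seqLE {ℓ f : PreSeq κ} (hℓ : IsLeaf code.T ℓ) (hle : seqLE ℓ f) :
    graftStrat code σ τ f = appendSeq ℓ (τ ℓ (shiftSeq ℓ f)) := by
  have h : ∃ ℓ, IsLeaf code.T ℓ ∧ seqLE ℓ f := ⟨ℓ, hℓ, hle⟩
  rw [graftStrat, dif_pos h, choose_eq_of_isLeaf code h hℓ hle]

lemma graftStrat_of_not_isLeaf {f : PreSeq κ} (hf : f ∈ code.T) (hnl : ¬ IsLeaf code.T f) :
    graftStrat code σ τ f = σ f :=
  dif_neg (not_exists_isLeaf_seqLE code hf hnl)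

def GraftReach (σ : PreSeq κ → PreSeq κ) (τ : PreSeq κ → PreSeq κ → PreSeq κ) (f : PreSeq κ) :
    Prop :=
  ((¬ ∃ ℓ, IsLeaf code.T ℓ ∧ seqLE ℓ f) → f ∈ code.T ∧ Reach code σ f) ∧
  ∀ ℓ, IsLeaf code.T ℓ → seqLE ℓ f → Reach code σ ℓ ∧ Reach (C ℓ) (τ ℓ) (shiftSeq ℓ f)

lemma graftReach_of_reach {f : PreSeq κ} (hf : f ∈ code.T) (hr : Reach code σ f) :
    GraftReach code C σ τ f := by
  refine ⟨fun _ => ⟨hf, hr⟩, fun ℓ hℓ hle => ?_⟩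
  obtain rfl := hℓ.2 f hf hle
  rw [shiftSeq_self (code.mem_isSeq f hf)]
  exact ⟨hr, Reach.root⟩

lemma graftReach_of_seqLE {ℓ f : PreSeq κ} (hℓ : IsLeaf code.T ℓ) (hle : seqLE ℓ f)
    (hr : Reach code σ ℓ) (hr' : Reach (C ℓ) (τ ℓ) (shiftSeq ℓ f)) : GraftReach code C σ τ f :=
  ⟨fun h => absurd ⟨ℓ, hℓ, hle⟩ h, fun ℓ' hℓ' hle' => by
    obtain rfl := eq_of_isLeaf code.mem_isSeq hℓ' hℓ hle' hle
    exact ⟨hr, hr'⟩⟩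

lemma GraftReach.inter {f g : PreSeq κ} (hf : GraftReach code C σ τ f)
    (hlbl : grafth code C f = BLabel.inter) (hsucc : ImmSucc (graftT code C) f g) :
    GraftReach code C σ τ g := by
  by_cases h : ∃ ℓ, IsLeaf code.T ℓ ∧ seqLE ℓ f
  · obtain ⟨ℓ, hℓ, hle⟩ := h
    have hℓseq := code.mem_isSeq ℓ hℓ.1
    have hℓg := hle.trans hsucc.2.1
    have hmem := shiftSeq_mem_of_mem_graftT code C hsucc.1 hℓ hℓg
    rw [← appendSeq_shiftSeq hℓseq hle, ← appendSeq_shiftSeq hℓseq hℓg] at hsucc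
    obtain ⟨hr, hr'⟩ := hf.2 ℓ hℓ hle
    exact graftReach_of_seqLE code C hℓ hℓg hr (Reach.inter _ _ hr'
      ((grafth_of_seqLE code C hℓ hle).symm.trans hlbl)
      ((immSucc_graftT_appendSeq_iff code C hℓ hmem).1 hsucc))
  · obtain ⟨hfT, hr⟩ := hf.1 h
    have hnl : ¬ IsLeaf code.T f := fun hl => h ⟨f, hl, seqLE_refl f⟩
    have hgT := mem_of_immSucc_graftT code C hfT hnl hsucc
    exact graftReach_of_reach code C hgT (Reach.inter _ _ hr
      ((grafth_of_not_isLeaf code C hfT hnl).symm.trans hlbl)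
      (immSucc_of_immSucc_graftT code C hgT hsucc))

lemma GraftReach.union (hσ : IsLegalStrategy code σ) {f : PreSeq κ}
    (hf : GraftReach code C σ τ f) (hlbl : grafth code C f = BLabel.union) :
    GraftReach code C σ τ (graftStrat code σ τ f) := by
  by_cases h : ∃ ℓ, IsLeaf code.T ℓ ∧ seqLE ℓ f
  · obtain ⟨ℓ, hℓ, hle⟩ := h
    obtain ⟨hr, hr'⟩ := hf.2 ℓ hℓ hle
    rw [graftStrat_of_seqLE code hℓ hle]
    refine graftReach_of_seqLE code C hℓ (seqLE_appendSeq_of_isLeaf code hℓ _) hr ?_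
    rw [shiftSeq_appendSeq]
    exact Reach.union _ hr' ((grafth_of_seqLE code C hℓ hle).symm.trans hlbl)
  · obtain ⟨hfT, hr⟩ := hf.1 h
    have hnl : ¬ IsLeaf code.T f := fun hl => h ⟨f, hl, seqLE_refl f⟩
    have hlbl' := (grafth_of_not_isLeaf code C hfT hnl).symm.trans hlbl
    rw [graftStrat_of_not_isLeaf code hfT hnl]
    exact graftReach_of_reach code C (hσ f hr hlbl').1 (Reach.union f hr hlbl')

lemma GraftReach.lim {c : Set (PreSeq κ)} (hne : c.Nonempty) (hchain : IsChain seqLE c)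
    (hc : ∀ f ∈ c, GraftReach code C σ τ f) : GraftReach code C σ τ (seqSup c) := by
  by_cases h : ∃ a ∈ c, ∃ ℓ, IsLeaf code.T ℓ ∧ seqLE ℓ a
  · obtain ⟨a, ha, ℓ, hℓ, hℓa⟩ := h
    rw [seqSup_eq_appendSeq (code.mem_isSeq ℓ hℓ.1) hchain ha hℓa]
    refine graftReach_of_seqLE code C hℓ (seqLE_appendSeq_of_isLeaf code hℓ _)
      ((hc a ha).2 ℓ hℓ hℓa).1 ?_
    rw [shiftSeq_appendSeq]
    exact Reach.lim _ ⟨_, mem_image_of_mem _ ⟨ha, hℓa⟩⟩ (isChain_image_shiftSeq hchain ℓ)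
      (forall_mem_image.2 fun f hf => ((hc f hf.1).2 ℓ hℓ hf.2).2)
  · have hc' : ∀ f ∈ c, f ∈ code.T ∧ Reach code σ f := fun f hf =>
      (hc f hf).1 fun ⟨ℓ, hℓ, hle⟩ => h ⟨f, hf, ℓ, hℓ, hle⟩
    exact graftReach_of_reach code C (code.chain_sup c (fun f hf => (hc' f hf).1) hne hchain)
      (Reach.lim c hne hchain fun f hf => (hc' f hf).2)

lemma graftReach_of_reach_graftStrat (hκ : ℵ₀ ≤ κ) (hσ : IsLegalStrategy code σ) {f : PreSeq κ}
    (h : Reach (graft code C hκ) (graftStrat code σ τ) f) : GraftReach code C σ τ f := by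
  induction h with
  | root => exact graftReach_of_reach code C code.root_mem Reach.root
  | inter _ _ _ hlbl hsucc ih => exact ih.inter code C hlbl hsucc
  | union _ _ hlbl ih => exact ih.union code C hσ hlbl
  | lim _ hne hchain _ ih => exact GraftReach.lim code C hne hchain ih

end GraftStrategy

section GraftWinning

variable {κ : Cardinal.{0}} {Z : Type*} {Basic Basic' : Set (Set Z)}
  {code : BorelStarCode κ Z Basic'} {C : PreSeq κ → BorelStarCode κ Z Basic} (hκ : ℵ₀ ≤ κ)

lemma isWinningStrategy_graftStrat {x : Z} {σ : PreSeq κ → PreSeq κ}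
    {τ : PreSeq κ → PreSeq κ → PreSeq κ} (hσ : IsWinningStrategy code x σ)
    (hτ : ∀ ℓ, IsLeaf code.T ℓ → Reach code σ ℓ → IsWinningStrategy (C ℓ) x (τ ℓ)) :
    IsWinningStrategy (graft code C hκ) x (graftStrat code σ τ) := by
  have hpos := fun f (hf : Reach (graft code C hκ) (graftStrat code σ τ) f) =>
    graftReach_of_reach_graftStrat code C hκ hσ.1 hf
  refine ⟨fun f hf hlbl => ?_, fun f s hf hlbl => ?_⟩ <;>
    by_cases h : ∃ ℓ, IsLeaf code.T ℓ ∧ seqLE ℓ f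
  · obtain ⟨ℓ, hℓ, hle⟩ := h
    obtain ⟨hr, hr'⟩ := (hpos f hf).2 ℓ hℓ hle
    have hmove := (hτ ℓ hℓ hr).1 _ hr' ((grafth_of_seqLE code C hℓ hle).symm.trans hlbl)
    have := (immSucc_graftT_appendSeq_iff code C hℓ hmove.1).2 hmove
    rwa [appendSeq_shiftSeq (code.mem_isSeq ℓ hℓ.1) hle, ← graftStrat_of_seqLE code hℓ hle] at this
  · obtain ⟨hfT, hr⟩ := (hpos f hf).1 h
    have hnl : ¬ IsLeaf code.T f := fun hl => h ⟨f, hl, seqLE_refl f⟩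
    rw [graftStrat_of_not_isLeaf code hfT hnl]
    exact immSucc_graftT_of_immSucc code C
      (hσ.1 f hr ((grafth_of_not_isLeaf code C hfT hnl).symm.trans hlbl))
  · obtain ⟨ℓ, hℓ, hle⟩ := h
    obtain ⟨hr, hr'⟩ := (hpos f hf).2 ℓ hℓ hle
    exact (hτ ℓ hℓ hr).2 _ s hr' ((grafth_of_seqLE code C hℓ hle).symm.trans hlbl)
  · obtain ⟨hfT, -⟩ := (hpos f hf).1 h
    have hnl : ¬ IsLeaf code.T f := fun hl => h ⟨f, hl, seqLE_refl f⟩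
    exact absurd ((code.isLeaf_iff hfT).2
      ⟨s, (grafth_of_not_isLeaf code C hfT hnl).symm.trans hlbl⟩) hnl

lemma iIWinsBStar_graft_of_iIWinsBStar
    (HC : ∀ ℓ s, IsLeaf code.T ℓ → code.h ℓ = BLabel.leaf s → {x | IIWinsBStar (C ℓ) x} = s)
    {x : Z} (h : IIWinsBStar code x) : IIWinsBStar (graft code C hκ) x := by
  obtain ⟨σ, hσ⟩ := h
  refine ⟨_, isWinningStrategy_graftStrat hκ (τ := fun ℓ =>
    Classical.epsilon (IsWinningStrategy (C ℓ) x)) hσ fun ℓ hℓ hr => Classical.epsilon_spec ?_⟩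
  obtain ⟨s, -, hs⟩ := code.label_leaf ℓ hℓ.1 hℓ
  have hx : x ∈ {x | IIWinsBStar (C ℓ) x} := (HC ℓ s hℓ hs).symm ▸ hσ.2 ℓ s hr hs
  exact hx

end GraftWinning

theorem isBorelStar_of_code {κ : Cardinal.{0}} {Z : Type*} {Basic Basic' : Set (Set Z)}
    (hκ : ℵ₀ ≤ κ) (hBasic : Basic.Nonempty) (hBasic' : ∀ s ∈ Basic', IsBorelStar κ Basic s)
    (code : BorelStarCode κ Z Basic') : IsBorelStar κ Basic {x | IIWinsBStar code x} := by
  have hC : ∀ ℓ, ∃ D : BorelStarCode κ Z Basic,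
      ∀ s, IsLeaf code.T ℓ → code.h ℓ = BLabel.leaf s → {x | IIWinsBStar D x} = s := by
    intro ℓ
    by_cases hℓ : IsLeaf code.T ℓ
    · obtain ⟨s₀, hs₀, hℓs₀⟩ := code.label_leaf ℓ hℓ.1 hℓ
      obtain ⟨D, hD⟩ := hBasic' s₀ hs₀
      refine ⟨D, fun s _ hs => ?_⟩
      rw [← BLabel.leaf.inj (hℓs₀.symm.trans hs), hD]
    · obtain ⟨D, -⟩ := isBorelStar_of_mem hκ hBasic.some_mem
      exact ⟨D, fun _ h => absurd h hℓ⟩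
  choose C HC using hC
  exact ⟨graft code C hκ, Set.ext fun x =>
    ⟨iIWinsBStar_graft_of_iIWinsBStar hκ (fun ℓ s hℓ => HC ℓ s hℓ),
      iIWinsBStar_of_iIWinsBStar_graft hκ (fun ℓ s hℓ => HC ℓ s hℓ)⟩⟩

section Closure

variable {κ : Cardinal.{0}} {Z : Type*} {Basic : Set (Set Z)}

lemma exists_surjective_of_mk_le {ι : Type} [Nonempty ι] (hι : #ι ≤ κ) :
    ∃ e : O κ → ι, Function.Surjective e := by
  obtain ⟨e⟩ : Nonempty (ι ↪ O κ) := by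
    rw [← Cardinal.lift_mk_le', mk_O, Cardinal.lift_id'.{0, 1}]
    exact Cardinal.lift_le.2 hι
  exact ⟨Function.invFun e, Function.invFun_surjective e.injective⟩

lemma isBorelStar_iUnion (hκ : ℵ₀ ≤ κ) (hBasic : Basic.Nonempty) {ι : Type} [Nonempty ι]
    (hι : #ι ≤ κ) {B : ι → Set Z} (hB : ∀ i, IsBorelStar κ Basic (B i)) :
    IsBorelStar κ Basic (⋃ i, B i) := by
  obtain ⟨e, he⟩ := exists_surjective_of_mk_le hι
  rw [← he.iUnion_comp, ← setOf_iIWinsBStar_depthOneCode_union hκ (fun a => B (e a))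
    (Basic := {s | IsBorelStar κ Basic s}) fun a => hB (e a)]
  exact isBorelStar_of_code hκ hBasic (fun _ hs => hs) _

lemma isBorelStar_iInter (hκ : ℵ₀ ≤ κ) (hBasic : Basic.Nonempty) {ι : Type} [Nonempty ι]
    (hι : #ι ≤ κ) {B : ι → Set Z} (hB : ∀ i, IsBorelStar κ Basic (B i)) :
    IsBorelStar κ Basic (⋂ i, B i) := by
  obtain ⟨e, he⟩ := exists_surjective_of_mk_le hι
  rw [← he.iInter_comp, ← setOf_iIWinsBStar_depthOneCode_inter hκ (fun a => B (e a))
    (Basic := {s | IsBorelStar κ Basic s}) fun a => hB (e a)]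
  exact isBorelStar_of_code hκ hBasic (fun _ hs => hs) _

end Closure

section KBorel

variable {κ : Cardinal.{0}}

lemma univ_mem_basicOpens (hκ : ℵ₀ ≤ κ) : (univ : Set (Point κ)) ∈ basicOpens κ :=
  ⟨0, zero_lt_one.trans (one_lt_ord hκ), fun _ => false,
    (eq_univ_of_forall fun _ _ hγ => absurd hγ (by simp)).symm⟩

lemma isBorelStar_empty (hκ : ℵ₀ ≤ κ) : IsBorelStar κ (basicOpens κ) (∅ : Set (Point κ)) := by
  let a : O κ := ⟨0, zero_lt_one.trans (one_lt_ord hκ)⟩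
  have hempty : ⋂ b : Bool, basicOpen κ 1 (fun _ => b) = ∅ :=
    eq_empty_of_forall_notMem fun η hη => by
      have h := mem_iInter.1 hη
      exact Bool.false_ne_true ((h false a zero_lt_one).symm.trans (h true a zero_lt_one))
  have hBool : #Bool ≤ κ := by
    rw [Cardinal.mk_bool]
    exact Cardinal.natCast_lt_aleph0.le.trans hκ
  rw [← hempty]
  exact isBorelStar_iInter hκ ⟨_, univ_mem_basicOpens hκ⟩ hBool fun b =>
    isBorelStar_of_mem hκ ⟨1, one_lt_ord hκ, _, rfl⟩

lemma IsKBorel.isBorelStar (hκ : ℵ₀ ≤ κ) {s : Set (Point κ)} (h : IsKBorel κ s) :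
    IsBorelStar κ (basicOpens κ) s := by
  have hBasic : (basicOpens κ).Nonempty := ⟨_, univ_mem_basicOpens hκ⟩
  induction h with
  | basic s hs => exact isBorelStar_of_mem hκ hs
  | iUnion ι hι B _ ih =>
    rcases isEmpty_or_nonempty ι with hι' | hι'
    · rw [iUnion_of_empty]
      exact isBorelStar_empty hκ
    · exact isBorelStar_iUnion hκ hBasic hι ih
  | iInter ι hι B _ ih =>
    rcases isEmpty_or_nonempty ι with hι' | hι'
    · rw [iInter_of_empty]
      exact isBorelStar_of_mem hκ (univ_mem_basicOpens hκ)
    · exact isBorelStar_iInter hκ hBasic hι ih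

end KBorel

theorem isBorelStar_of_borelLeaves_general (κ : Cardinal.{0}) (hκ₁ : ℵ₀ < κ)
    (code : BorelStarCode κ (Point κ) {s | IsKBorel κ s}) :
    IsBorelStar κ (basicOpens κ) {η : Point κ | IIWinsBStar code η} :=
  isBorelStar_of_code hκ₁.le ⟨_, univ_mem_basicOpens hκ₁.le⟩
    (fun _ hs => IsKBorel.isBorelStar hκ₁.le hs) code

/-- Suppose `T` is a closed `κ⁺,κ`-tree and `h` labels each leaf of `T`
with a `κ`-Borel subset of `2^κ` and every other node with `∪` or `∩` (i.e. `(T, h)` is a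
`Borel*`-code with Borel leaf labels). Then the set of `η` such that player II has a
winning strategy in `B*(T, h, η)` is a `Borel*` set. -/
theorem isBorelStar_of_borelLeaves (κ : Cardinal.{0}) (hκ₁ : ℵ₀ < κ) (hκ₂ : κ ^< κ = κ)
    (code : BorelStarCode κ (Point κ) {s | IsKBorel κ s}) :
    IsBorelStar κ (basicOpens κ) {η : Point κ | IIWinsBStar code η} :=
  isBorelStar_of_borelLeaves_general κ hκ₁ code

end GenCantor
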